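/- arXiv:2502.13492 — 2 statements merged into one kernel-verified Lean document; each statement's English description precedes it below -/
import Mathlib

section
/- Let A be a real m×n matrix whose columns a_1,…,a_n are ℓ2-normalized, and let μ = max_{i≠j} |⟨a_i, a_j⟩| be its coherence. Then for every positive integer k with k < 1/μ + 1, the matrix A satisfies the restricted isometry property of order k with constant δ_k = μ(k−1): for every vector x ∈ ℝ^n with at most k nonzero entries, (1 − μ(k−1))·‖x‖₂² ≤ ‖Ax‖₂² ≤ (1 + μ(k−1))·‖x‖₂². -/
open Finset Matrix

/- Gershgorin-type bound on the support of `x`: the Gram matrix `AᵀA` has unit diagonal, so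
`‖Ax‖² - ‖x‖²` is the quadratic form of its off-diagonal part, which is at most
`μ (‖x‖₁² - ‖x‖₂²)` in absolute value; Cauchy–Schwarz on a support of size `k` gives
`‖x‖₁² ≤ k ‖x‖₂²`. -/

variable {ι κ : Type*} [Fintype ι] [Fintype κ]

theorem sum_mulVec_sq_eq_dotProduct_gram (A : Matrix κ ι ℝ) (x : ι → ℝ) :
    ∑ l, (A *ᵥ x) l ^ 2 = x ⬝ᵥ (Aᵀ * A) *ᵥ x := by
  rw [← mulVec_mulVec, dotProduct_mulVec, vecMul_transpose]
  simp only [dotProduct, sq]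

theorem abs_dotProduct_mulVec_le_of_offDiag (E : Matrix ι ι ℝ) {μ : ℝ}
    (hdiag : ∀ i, E i i = 0) (hoff : ∀ i j, i ≠ j → |E i j| ≤ μ) (x : ι → ℝ) :
    |x ⬝ᵥ E *ᵥ x| ≤ μ * ((∑ i, |x i|) ^ 2 - ∑ i, x i ^ 2) := by
  classical
  have hterm : ∀ i j, |x i * (E i j * x j)| ≤
      μ * (|x i| * |x j|) - if i = j then μ * x i ^ 2 else 0 := by
    intro i j
    split_ifs with hij
    · subst hij
      simp [hdiag, sq]
    · calc |x i * (E i j * x j)| = |E i j| * (|x i| * |x j|) := by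
            rw [abs_mul, abs_mul]; ring
        _ ≤ μ * (|x i| * |x j|) - 0 := by rw [sub_zero]; gcongr; exact hoff i j hij
  calc |x ⬝ᵥ E *ᵥ x| ≤ ∑ i, ∑ j, |x i * (E i j * x j)| := by
        simp only [dotProduct, mulVec, mul_sum]
        exact (abs_sum_le_sum_abs _ _).trans (sum_le_sum fun i _ => abs_sum_le_sum_abs _ _)
    _ ≤ ∑ i, ∑ j, (μ * (|x i| * |x j|) - if i = j then μ * x i ^ 2 else 0) :=
        sum_le_sum fun i _ => sum_le_sum fun j _ => hterm i j
    _ = μ * ((∑ i, |x i|) ^ 2 - ∑ i, x i ^ 2) := by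
        simp only [sum_sub_distrib, sum_ite_eq, mem_univ, if_true, ← mul_sum, ← sum_mul, sq]
        ring

theorem sq_sum_abs_le_card_support_mul_sum_sq (x : ι → ℝ) :
    (∑ i, |x i|) ^ 2 ≤ #{i | x i ≠ 0} * ∑ i, x i ^ 2 := by
  have hsupp : ∀ f : ℝ → ℝ, f 0 = 0 → ∑ i ∈ {i | x i ≠ 0}, f (x i) = ∑ i, f (x i) :=
    fun f hf => sum_filter_of_ne fun i _ h hx => h (by rw [hx, hf])
  rw [← hsupp _ abs_zero, ← hsupp (· ^ 2) (zero_pow two_ne_zero)]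
  simpa only [sq_abs] using sq_sum_le_card_mul_sum_sq (s := {i | x i ≠ 0}) (f := fun i => |x i|)

theorem restrictedIsometry_of_gram_offDiag_le (A : Matrix κ ι ℝ) {μ : ℝ} (hμ : 0 ≤ μ)
    (hdiag : ∀ i, (Aᵀ * A) i i = 1) (hoff : ∀ i j, i ≠ j → |(Aᵀ * A) i j| ≤ μ)
    {k : ℕ} (x : ι → ℝ) (hx : #{i | x i ≠ 0} ≤ k) :
    (1 - μ * (k - 1)) * ∑ i, x i ^ 2 ≤ ∑ l, (A *ᵥ x) l ^ 2 ∧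
      ∑ l, (A *ᵥ x) l ^ 2 ≤ (1 + μ * (k - 1)) * ∑ i, x i ^ 2 := by
  classical
  have hsplit : ∑ l, (A *ᵥ x) l ^ 2 = ∑ i, x i ^ 2 + x ⬝ᵥ (Aᵀ * A - 1) *ᵥ x := by
    rw [sum_mulVec_sq_eq_dotProduct_gram, sub_mulVec, dotProduct_sub, one_mulVec]
    simp only [dotProduct, sq]
    ring
  have hcs : (∑ i, |x i|) ^ 2 ≤ k * ∑ i, x i ^ 2 :=
    (sq_sum_abs_le_card_support_mul_sum_sq x).trans
      (mul_le_mul_of_nonneg_right (by exact_mod_cast hx) (sum_nonneg fun i _ => sq_nonneg _))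
  have hbound : |x ⬝ᵥ (Aᵀ * A - 1) *ᵥ x| ≤ μ * (k - 1) * ∑ i, x i ^ 2 :=
    calc |x ⬝ᵥ (Aᵀ * A - 1) *ᵥ x| ≤ μ * ((∑ i, |x i|) ^ 2 - ∑ i, x i ^ 2) :=
          abs_dotProduct_mulVec_le_of_offDiag _ (fun i => by simp [hdiag])
            (fun i j hij => by simpa [one_apply_ne hij] using hoff i j hij) x
      _ ≤ μ * (k * ∑ i, x i ^ 2 - ∑ i, x i ^ 2) := by gcongr
      _ = μ * (k - 1) * ∑ i, x i ^ 2 := by ring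
  rw [hsplit]
  constructor <;> linarith [abs_le.mp hbound]

theorem coherence_implies_RIP_general (m n : ℕ) (A : Matrix (Fin m) (Fin n) ℝ)
    (hnorm : ∀ i : Fin n, ∑ k : Fin m, (A k i) ^ 2 = 1)
    (μ : ℝ)
    (hμ : IsGreatest {t : ℝ | ∃ i j : Fin n, i ≠ j ∧
        t = |∑ k : Fin m, A k i * A k j|} μ)
    (k : ℕ) :
    ∀ x : Fin n → ℝ,
      (Finset.univ.filter (fun i => x i ≠ 0)).card ≤ k →
      (1 - μ * ((k : ℝ) - 1)) * (∑ i : Fin n, (x i) ^ 2) ≤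
          ∑ l : Fin m, (A.mulVec x l) ^ 2 ∧
        ∑ l : Fin m, (A.mulVec x l) ^ 2 ≤
          (1 + μ * ((k : ℝ) - 1)) * (∑ i : Fin n, (x i) ^ 2) := by
  obtain ⟨⟨_, _, -, rfl⟩, hmax⟩ := hμ
  have hgram : ∀ i j, (Aᵀ * A) i j = ∑ l, A l i * A l j := fun i j => by
    simp only [mul_apply, transpose_apply]
  refine restrictedIsometry_of_gram_offDiag_le A (abs_nonneg _) (fun i => ?_) (fun i j hij => ?_)
  · simpa only [hgram, sq] using hnorm i
  · exact hgram i j ▸ hmax ⟨i, j, hij, rfl⟩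

/-- coherence implies RIP of order `k` with constant `μ(k-1)` for
`k < 1/μ + 1`, for a matrix with ℓ2-normalized columns. -/
theorem coherence_implies_RIP (m n : ℕ) (A : Matrix (Fin m) (Fin n) ℝ)
    (hnorm : ∀ i : Fin n, ∑ k : Fin m, (A k i) ^ 2 = 1)
    (μ : ℝ)
    (hμ : IsGreatest {t : ℝ | ∃ i j : Fin n, i ≠ j ∧
        t = |∑ k : Fin m, A k i * A k j|} μ)
    (k : ℕ) (hk0 : 0 < k) (hk : (k : ℝ) < 1 / μ + 1) :
    ∀ x : Fin n → ℝ,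
      (Finset.univ.filter (fun i => x i ≠ 0)).card ≤ k →
      (1 - μ * ((k : ℝ) - 1)) * (∑ i : Fin n, (x i) ^ 2) ≤
          ∑ l : Fin m, (A.mulVec x l) ^ 2 ∧
        ∑ l : Fin m, (A.mulVec x l) ^ 2 ≤
          (1 + μ * ((k : ℝ) - 1)) * (∑ i : Fin n, (x i) ^ 2) :=
  coherence_implies_RIP_general m n A hnorm μ hμ k
end

section
/- (Welch bound) Let A be a real m×n matrix with n ≥ m ≥ 1 whose columns a_1,…,a_n are ℓ2-normalized. Then the coherence of A satisfies μ_A = max_{i≠j} |⟨a_i, a_j⟩| ≥ √((n − m)/(m(n − 1))). -/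
open Finset

/-- Welch bound: for a real m×n matrix with ℓ2-normalized columns and
`n ≥ m ≥ 1`, the coherence satisfies `μ ≥ √((n−m)/(m(n−1)))`. -/
theorem welch_bound (m n : ℕ) (hm : 1 ≤ m) (hmn : m ≤ n)
    (A : Matrix (Fin m) (Fin n) ℝ)
    (hnorm : ∀ i : Fin n, ∑ k : Fin m, (A k i) ^ 2 = 1)
    (μ : ℝ)
    (hμ : IsGreatest {t : ℝ | ∃ i j : Fin n, i ≠ j ∧
        t = |∑ k : Fin m, A k i * A k j|} μ) :
    Real.sqrt (((n : ℝ) - m) / (m * ((n : ℝ) - 1))) ≤ μ := by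
  obtain ⟨⟨i0, j0, hij0, heq0⟩, hub⟩ := hμ
  have hμ0 : 0 ≤ μ := heq0 ▸ abs_nonneg _
  have hn2 : 2 ≤ n := by
    by_contra h
    push_neg at h
    interval_cases n
    · exact absurd i0.2 (by omega)
    · exact hij0 (Subsingleton.elim i0 j0)
  set G : Fin n → Fin n → ℝ := fun i j => ∑ k : Fin m, A k i * A k j with hG
  set B : Fin m → Fin m → ℝ := fun k l => ∑ i : Fin n, A k i * A l i with hB
  -- the double sum identity
  have hswap : ∑ i : Fin n, ∑ j : Fin n, (G i j) ^ 2
      = ∑ k : Fin m, ∑ l : Fin m, (B k l) ^ 2 := by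
    have e1 : ∀ i j : Fin n, (G i j) ^ 2
        = ∑ q : Fin m × Fin m, (A q.1 i * A q.1 j) * (A q.2 i * A q.2 j) := by
      intro i j
      rw [sq, hG, Finset.sum_mul_sum, Fintype.sum_prod_type]
    have e2 : ∀ k l : Fin m, (B k l) ^ 2
        = ∑ p : Fin n × Fin n, (A k p.1 * A l p.1) * (A k p.2 * A l p.2) := by
      intro k l
      rw [sq, hB, Finset.sum_mul_sum, Fintype.sum_prod_type]
    calc ∑ i : Fin n, ∑ j : Fin n, (G i j) ^ 2
        = ∑ p : Fin n × Fin n, ∑ q : Fin m × Fin m,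
            (A q.1 p.1 * A q.1 p.2) * (A q.2 p.1 * A q.2 p.2) := by
          rw [Fintype.sum_prod_type]
          exact Finset.sum_congr rfl fun i _ => Finset.sum_congr rfl fun j _ => e1 i j
      _ = ∑ q : Fin m × Fin m, ∑ p : Fin n × Fin n,
            (A q.1 p.1 * A q.1 p.2) * (A q.2 p.1 * A q.2 p.2) := Finset.sum_comm
      _ = ∑ k : Fin m, ∑ l : Fin m, (B k l) ^ 2 := by
          rw [Fintype.sum_prod_type]
          refine Finset.sum_congr rfl fun k _ => Finset.sum_congr rfl fun l _ => ?_
          rw [e2 k l]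
          exact Finset.sum_congr rfl fun p _ => by ring
  -- trace of B is n
  have htrace : ∑ k : Fin m, B k k = n := by
    have h1 : ∑ k : Fin m, B k k = ∑ i : Fin n, ∑ k : Fin m, (A k i) ^ 2 := by
      rw [Finset.sum_comm]
      simp [hB, sq]
    rw [h1]
    simp [hnorm]
  -- Cauchy-Schwarz
  have hCS : ((n : ℝ)) ^ 2 ≤ (m : ℝ) * ∑ k : Fin m, (B k k) ^ 2 := by
    have h := sq_sum_le_card_mul_sum_sq (s := (Finset.univ : Finset (Fin m)))
      (f := fun k => B k k)
    simpa [htrace] using h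
  -- diagonal ≤ full sum
  have hdiag : ∑ k : Fin m, (B k k) ^ 2 ≤ ∑ k : Fin m, ∑ l : Fin m, (B k l) ^ 2 := by
    apply Finset.sum_le_sum
    intro k _
    exact Finset.single_le_sum (f := fun l => (B k l) ^ 2)
      (fun l _ => sq_nonneg _) (Finset.mem_univ k)
  -- off-diagonal bound
  have hGG : ∀ i j : Fin n, i ≠ j → (G i j) ^ 2 ≤ μ ^ 2 := by
    intro i j hij
    have h1 : |G i j| ≤ μ := hub ⟨i, j, hij, rfl⟩
    have h2 := sq_abs (G i j)
    nlinarith [abs_nonneg (G i j)]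
  have hupper : ∑ i : Fin n, ∑ j : Fin n, (G i j) ^ 2
      ≤ (n : ℝ) + (n : ℝ) * (((n : ℝ) - 1) * μ ^ 2) := by
    have hrow : ∀ i : Fin n, ∑ j : Fin n, (G i j) ^ 2 ≤ 1 + ((n : ℝ) - 1) * μ ^ 2 := by
      intro i
      rw [← Finset.add_sum_erase _ _ (Finset.mem_univ i)]
      have hGii : (G i i) ^ 2 = 1 := by
        have h3 : G i i = 1 := by
          rw [hG]; simpa [sq] using hnorm i
        rw [h3]; norm_num
      rw [hGii]
      refine (add_le_add_iff_left 1).mpr ?_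
      calc ∑ j ∈ Finset.univ.erase i, (G i j) ^ 2
          ≤ ∑ j ∈ Finset.univ.erase i, μ ^ 2 := by
            apply Finset.sum_le_sum
            intro j hj
            exact hGG i j (Ne.symm (Finset.ne_of_mem_erase hj))
        _ = ((n : ℝ) - 1) * μ ^ 2 := by
            rw [Finset.sum_const, Finset.card_erase_of_mem (Finset.mem_univ i),
              Finset.card_univ, Fintype.card_fin, nsmul_eq_mul,
              Nat.cast_sub (by omega : 1 ≤ n)]
            norm_num
    calc ∑ i : Fin n, ∑ j : Fin n, (G i j) ^ 2
        ≤ ∑ _i : Fin n, (1 + ((n : ℝ) - 1) * μ ^ 2) :=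
          Finset.sum_le_sum (fun i _ => hrow i)
      _ = (n : ℝ) + (n : ℝ) * (((n : ℝ) - 1) * μ ^ 2) := by
          rw [Finset.sum_const, Finset.card_univ, Fintype.card_fin, nsmul_eq_mul]
          ring
  -- combine
  have key : (n : ℝ) ^ 2 ≤ (m : ℝ) * ((n : ℝ) + (n : ℝ) * (((n : ℝ) - 1) * μ ^ 2)) := by
    calc (n : ℝ) ^ 2 ≤ (m : ℝ) * ∑ k : Fin m, (B k k) ^ 2 := hCS
      _ ≤ (m : ℝ) * ∑ k : Fin m, ∑ l : Fin m, (B k l) ^ 2 :=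
          mul_le_mul_of_nonneg_left hdiag (Nat.cast_nonneg m)
      _ = (m : ℝ) * ∑ i : Fin n, ∑ j : Fin n, (G i j) ^ 2 := by rw [hswap]
      _ ≤ (m : ℝ) * ((n : ℝ) + (n : ℝ) * (((n : ℝ) - 1) * μ ^ 2)) :=
          mul_le_mul_of_nonneg_left hupper (Nat.cast_nonneg m)
  -- finish
  have hnR : (2 : ℝ) ≤ (n : ℝ) := by exact_mod_cast hn2
  have hmR : (1 : ℝ) ≤ (m : ℝ) := by exact_mod_cast hm
  have hfrac : ((n : ℝ) - m) / ((m : ℝ) * ((n : ℝ) - 1)) ≤ μ ^ 2 := by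
    rw [div_le_iff₀ (by nlinarith)]
    nlinarith [key, hnR, hmR]
  calc Real.sqrt (((n : ℝ) - m) / (m * ((n : ℝ) - 1)))
      ≤ Real.sqrt (μ ^ 2) := Real.sqrt_le_sqrt hfrac
    _ = μ := by rw [Real.sqrt_sq hμ0]
end
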